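/- arXiv:1602.07072 — 8 statements merged into one kernel-verified Lean document; each statement's English description precedes it below -/
import Mathlib

section
/- Let p, q ∈ Ω with p < q. Then every supporting hyperplane of I that separates q from I also separates p from I; that is, 𝒫(q) ⊆ 𝒫(p). -/
open RealInnerProductSpace
open scoped Classical

noncomputable section

/-- Euclidean space of dimension `n`. -/
abbrev Euc (n : ℕ) := EuclideanSpace ℝ (Fin n)

/-- The exterior `Ω = E \ closure I` of the convex set `I`. -/
def Omega {n : ℕ} (I : Set (Euc n)) : Set (Euc n) := (closure I)ᶜ

/-- The timelike Funk partial order: `p < q` iff `p ≠ q`, the segment `[p,q]` lies in `Ω`,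
and the ray from `p` through `q` enters `I` beyond `q`. -/
def funkLt {n : ℕ} (I : Set (Euc n)) (p q : Euc n) : Prop :=
  p ≠ q ∧ segment ℝ p q ⊆ Omega I ∧ ∃ t > (0:ℝ), q + t • (q - p) ∈ I

/-- The parameter at which the ray from `p` through `q` first hits `closure I` (beyond `q`). -/
def funkT0 {n : ℕ} (I : Set (Euc n)) (p q : Euc n) : ℝ :=
  sInf {t : ℝ | 0 < t ∧ q + t • (q - p) ∈ closure I}

/-- The point `b(p,q)` where the ray from `p` through `q` first hits `K = frontier I`. -/
def funkB {n : ℕ} (I : Set (Euc n)) (p q : Euc n) : Euc n :=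
  q + funkT0 I p q • (q - p)

/-- The timelike Funk metric `F(p,q) = log (dist p b(p,q) / dist q b(p,q))`, with `F(p,p) = 0`. -/
def funkF {n : ℕ} (I : Set (Euc n)) (p q : Euc n) : ℝ :=
  if p = q then 0 else Real.log (dist p (funkB I p q) / dist q (funkB I p q))

/-- Supporting hyperplanes of `I`, encoded as pairs `(u, c)` with `‖u‖ = 1`:
`I ⊆ {x | ⟪u,x⟫ < c}` and `closure I` meets `{x | ⟪u,x⟫ = c}`. -/
def SuppH {n : ℕ} (I : Set (Euc n)) : Set (Euc n × ℝ) :=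
  {uc | ‖uc.1‖ = 1 ∧ I ⊆ {x | ⟪uc.1, x⟫ < uc.2} ∧
    (closure I ∩ {x | ⟪uc.1, x⟫ = uc.2}).Nonempty}

/-- `𝒫(z)`: supporting hyperplanes of `I` separating `z` from `I`. -/
def SuppHSep {n : ℕ} (I : Set (Euc n)) (z : Euc n) : Set (Euc n × ℝ) :=
  {uc | uc ∈ SuppH I ∧ uc.2 < ⟪uc.1, z⟫}

/-- `D(p)`: the cone of timelike directions at `p`. -/
def Dcone {n : ℕ} (I : Set (Euc n)) (p : Euc n) : Set (Euc n) :=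
  {v | ∃ t > (0:ℝ), p + t • v ∈ I}

/-- `τ(p,v)`: the time for the ray `p + t • v` to reach `closure I`. -/
def tauF {n : ℕ} (I : Set (Euc n)) (p v : Euc n) : ℝ :=
  sInf {t : ℝ | 0 < t ∧ p + t • v ∈ closure I}

/-- The timelike Minkowski functional `P(p,v) = 1/τ(p,v)` of the timelike Funk metric. -/
def Pmink {n : ℕ} (I : Set (Euc n)) (p v : Euc n) : ℝ := 1 / tauF I p v

theorem inner_lt_inner_of_inner_add_smul_sub_lt {E : Type*} [NormedAddCommGroup E]
    [InnerProductSpace ℝ E] {u p q : E} {c t : ℝ} (ht : 0 < t)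
    (hbeyond : ⟪u, q + t • (q - p)⟫ < c) (hq : c < ⟪u, q⟫) : ⟪u, q⟫ < ⟪u, p⟫ := by
  rw [inner_add_right, inner_smul_right, inner_sub_right] at hbeyond
  nlinarith

theorem suppHSep_subset_of_funkLt_general {n : ℕ} (I : Set (Euc n)) (p q : Euc n)
    (hpq : funkLt I p q) :
    SuppHSep I q ⊆ SuppHSep I p := by
  rintro ⟨u, c⟩ ⟨hH, hqc⟩
  obtain ⟨-, -, t, ht, hI⟩ := hpq
  exact ⟨hH, hqc.trans (inner_lt_inner_of_inner_add_smul_sub_lt ht (hH.2.1 hI) hqc)⟩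

/-- if `p < q` then every supporting hyperplane separating `q` from `I`
also separates `p` from `I`, i.e. `𝒫(q) ⊆ 𝒫(p)`. -/
theorem suppHSep_subset_of_funkLt {n : ℕ} (hn : 1 ≤ n) (I : Set (Euc n))
    (hne : I.Nonempty) (hop : IsOpen I) (hconv : Convex ℝ I)
    (hcl : closure I ≠ Set.univ)
    (p q : Euc n) (hp : p ∈ Omega I) (hq : q ∈ Omega I)
    (hpq : funkLt I p q) :
    SuppHSep I q ⊆ SuppHSep I p :=
  suppHSep_subset_of_funkLt_general I p q hpq
end
end

section
/- The relation < on Ω is transitive: for all p, q, r ∈ Ω, if p < q and q < r, then p < r. -/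
/-!
Write `a = q + s • (q - p)` and `b = r + u • (r - q)` for the points of `I` witnessing `p < q`
and `q < r`. The point `r + (s * u / (1 + s + u)) • (r - p)` is a convex combination of `a` and
`b`, so the ray from `p` through `r` enters `I`. If a point `x` of `[p, r]` lay in `closure I`, the
half-open segment from `a` to `x` would lie in the open convex set `I`; but in the triangle
`p q r` that segment crosses `[q, r] ⊆ Ω`.
-/

open RealInnerProductSpace
open scoped Classical

noncomputable section

section RayTransitivity

variable {E : Type*} [AddCommGroup E] [Module ℝ E]

theorem add_smul_sub_eq_combo_add_smul_sub (p q r : E) {s u : ℝ} (h : 1 + s + u ≠ 0) :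
    r + (s * u / (1 + s + u)) • (r - p) =
      (u / (1 + s + u)) • (q + s • (q - p)) + ((1 + s) / (1 + s + u)) • (r + u • (r - q)) := by
  match_scalars <;> field_simp <;> ring

theorem Convex.add_smul_sub_mem_of_add_smul_sub_mem {I : Set E} (hI : Convex ℝ I)
    {p q r : E} {s u : ℝ} (hs : 0 ≤ s) (hu : 0 ≤ u)
    (ha : q + s • (q - p) ∈ I) (hb : r + u • (r - q) ∈ I) :
    r + (s * u / (1 + s + u)) • (r - p) ∈ I := by
  have hd : 0 < 1 + s + u := by linarith
  rw [add_smul_sub_eq_combo_add_smul_sub p q r hd.ne']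
  exact hI ha hb (by positivity) (by positivity) (by field_simp; ring)

/-- Where the segment from `q + s • (q - p)` to `(1 - β) • p + β • r` crosses `[q, r]`. -/
theorem combo_add_smul_sub_mem_segment (p q r : E) {s β : ℝ} (hs : 0 ≤ s) (hβ0 : 0 ≤ β)
    (hβ1 : β < 1) :
    (1 - s / (1 + s - β)) • (q + s • (q - p)) + (s / (1 + s - β)) • ((1 - β) • p + β • r) ∈
      segment ℝ q r := by
  have hd : 0 < 1 + s - β := by linarith
  have hν : s / (1 + s - β) ≤ 1 := (div_le_one hd).2 (by linarith)
  refine ⟨(1 - s / (1 + s - β)) * (1 + s), s / (1 + s - β) * β,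
    mul_nonneg (by linarith) (by linarith), by positivity, by field_simp; ring, ?_⟩
  match_scalars <;> (field_simp; try ring)

variable [TopologicalSpace E] [IsTopologicalAddGroup E] [ContinuousSMul ℝ E]

theorem Convex.segment_subset_compl_closure_of_add_smul_sub_mem {I : Set E} (hI : Convex ℝ I)
    (hI' : IsOpen I) {p q r : E} {s : ℝ} (hs : 0 ≤ s) (ha : q + s • (q - p) ∈ I)
    (hqr : segment ℝ q r ⊆ (closure I)ᶜ) : segment ℝ p r ⊆ (closure I)ᶜ := by
  rintro _ ⟨α, β, hα0, hβ0, hαβ, rfl⟩ hx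
  obtain rfl : α = 1 - β := by linarith
  have hβ1 : β < 1 := by
    refine lt_of_le_of_ne (by linarith) ?_
    rintro rfl
    exact hqr (right_mem_segment ℝ q r) (by simpa using hx)
  have hd : 0 < 1 + s - β := by linarith
  have hν : s / (1 + s - β) < 1 := (div_lt_one hd).2 (by linarith)
  have hyI := hI.combo_interior_closure_mem_interior (hI'.interior_eq ▸ ha) hx
    (sub_pos.2 hν) (by positivity) (sub_add_cancel _ _)
  exact hqr (combo_add_smul_sub_mem_segment p q r hs hβ0 hβ1)
    (subset_closure (interior_subset hyI))

end RayTransitivity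

theorem funkLt_trans_general {n : ℕ} (I : Set (Euc n))
    (hop : IsOpen I) (hconv : Convex ℝ I)
    (p q r : Euc n)
    (hpq : funkLt I p q) (hqr : funkLt I q r) :
    funkLt I p r := by
  obtain ⟨-, -, s, hs, ha⟩ := hpq
  obtain ⟨-, hqr_seg, u, hu, hb⟩ := hqr
  have hc := hconv.add_smul_sub_mem_of_add_smul_sub_mem hs.le hu.le ha hb
  refine ⟨?_, hconv.segment_subset_compl_closure_of_add_smul_sub_mem hop hs.le ha hqr_seg,
    _, by positivity, hc⟩
  rintro rfl
  exact hqr_seg (right_mem_segment ℝ q p) (subset_closure (by simpa using hc))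

/-- the timelike Funk order relation `<` is transitive on `Ω`. -/
theorem funkLt_trans {n : ℕ} (hn : 1 ≤ n) (I : Set (Euc n))
    (hne : I.Nonempty) (hop : IsOpen I) (hconv : Convex ℝ I)
    (hcl : closure I ≠ Set.univ)
    (p q r : Euc n) (hp : p ∈ Omega I) (hq : q ∈ Omega I) (hr : r ∈ Omega I)
    (hpq : funkLt I p q) (hqr : funkLt I q r) :
    funkLt I p r :=
  funkLt_trans_general I hop hconv p q r hpq hqr
end
end

section
/- Let p, q ∈ Ω with p < q and let b = b(p,q). For every supporting hyperplane π₀ = {x : ⟪u, x⟫ = c} ∈ 𝒫 with b ∈ π₀, the point q does not lie on π₀, both p and q satisfy ⟪u, ·⟫ > c, and dist p b / dist q b = d(p, π₀) / d(q, π₀); consequently F(p,q) = Real.log (d(p, π₀) / d(q, π₀)). -/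
/-!
Write `b = b(p,q) = q + t₀ • (q - p)`; since `q ∉ closure I`, `t₀ > 0`. The ray from `p` through
`q` reaches `I`, where `⟪u, ·⟫ < c`, only after passing `b`, where `⟪u, ·⟫ = c`; so `⟪u, ·⟫` is
strictly decreasing along it and `p`, `q` lie strictly on the far side of the hyperplane. Finally,
on a line through a point `b` of a hyperplane both the distance to `b` and the distance to the
hyperplane are multiples of the line parameter measured from `b` (similar triangles), so the two
ratios coincide.
-/

open RealInnerProductSpace
open scoped Classical

noncomputable section

section Hyperplane

variable {E : Type*} [NormedAddCommGroup E] [InnerProductSpace ℝ E] {u : E} {c : ℝ}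

theorem infDist_hyperplane (hu : ‖u‖ = 1) (x : E) :
    Metric.infDist x {y | ⟪u, y⟫ = c} = |⟪u, x⟫ - c| := by
  have foot : x - (⟪u, x⟫ - c) • u ∈ {y | ⟪u, y⟫ = c} := by
    simp only [Set.mem_ofPred_eq, inner_sub_right, real_inner_smul_right,
      real_inner_self_eq_norm_sq, hu]
    ring
  apply le_antisymm
  · calc Metric.infDist x {y | ⟪u, y⟫ = c}
        ≤ dist x (x - (⟪u, x⟫ - c) • u) := Metric.infDist_le_dist_of_mem foot
      _ = |⟪u, x⟫ - c| := by simp [norm_smul, hu]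
  · refine (Metric.le_infDist ⟨_, foot⟩).2 fun y (hy : ⟪u, y⟫ = c) => ?_
    calc |⟪u, x⟫ - c| = |⟪u, x - y⟫| := by rw [inner_sub_right, hy]
      _ ≤ ‖u‖ * ‖x - y‖ := abs_real_inner_le_norm u (x - y)
      _ = dist x y := by rw [hu, one_mul, dist_eq_norm]

theorem inner_add_smul_sub_of_inner_eq {b : E} (hb : ⟪u, b⟫ = c) (s : ℝ) (v : E) :
    ⟪u, b + s • v⟫ - c = s * ⟪u, v⟫ := by
  rw [inner_add_right, real_inner_smul_right, hb]
  ring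

theorem dist_div_dist_eq_infDist_div_infDist (hu : ‖u‖ = 1) {b v x y : E} {s s' : ℝ}
    (hb : ⟪u, b⟫ = c) (hv : ⟪u, v⟫ ≠ 0) (hx : x = b + s • v) (hy : y = b + s' • v) :
    dist x b / dist y b =
      Metric.infDist x {z | ⟪u, z⟫ = c} / Metric.infDist y {z | ⟪u, z⟫ = c} := by
  have hv₀ : ‖v‖ ≠ 0 := norm_ne_zero_iff.2 (by rintro rfl; simp at hv)
  subst hx hy
  rw [infDist_hyperplane hu, infDist_hyperplane hu, inner_add_smul_sub_of_inner_eq hb,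
    inner_add_smul_sub_of_inner_eq hb, dist_self_add_left, dist_self_add_left, norm_smul,
    norm_smul, abs_mul, abs_mul, Real.norm_eq_abs, Real.norm_eq_abs, mul_div_mul_right _ _ hv₀,
    mul_div_mul_right _ _ (abs_ne_zero.2 hv)]

end Hyperplane

theorem sInf_ray_pos {E : Type*} [NormedAddCommGroup E] [NormedSpace ℝ E] {C : Set E}
    (hC : IsClosed C) {x v : E} (hx : x ∉ C) (hhit : ∃ t > (0 : ℝ), x + t • v ∈ C) :
    0 < sInf {t : ℝ | 0 < t ∧ x + t • v ∈ C} := by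
  have hopen : {t : ℝ | x + t • v ∉ C} ∈ nhds 0 :=
    (hC.isOpen_compl.preimage (by fun_prop)).mem_nhds (by simpa using hx)
  obtain ⟨ε, hε, hball⟩ := Metric.mem_nhds_iff.1 hopen
  obtain ⟨t₁, ht₁, hC₁⟩ := hhit
  refine hε.trans_le (le_csInf ⟨t₁, ht₁, hC₁⟩ fun t ⟨ht, htC⟩ => ?_)
  by_contra! hlt
  exact hball (by simpa [abs_of_pos ht] using hlt) htC

section Funk

variable {n : ℕ} {I : Set (Euc n)} {p q : Euc n}

theorem funkT0_pos (hpq : funkLt I p q) : 0 < funkT0 I p q := by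
  obtain ⟨-, hseg, t, ht, htI⟩ := hpq
  exact sInf_ray_pos isClosed_closure (hseg (right_mem_segment ℝ p q))
    ⟨t, ht, subset_closure htI⟩

theorem inner_sub_neg_of_inner_funkB_eq (hpq : funkLt I p q) {u : Euc n} {c : ℝ}
    (hI : I ⊆ {x | ⟪u, x⟫ < c}) (hb : ⟪u, funkB I p q⟫ = c) : ⟪u, q - p⟫ < 0 := by
  obtain ⟨-, -, t₁, ht₁, ht₁I⟩ := hpq
  have ht₀_le : funkT0 I p q ≤ t₁ :=
    csInf_le ⟨0, fun t ht => ht.1.le⟩ ⟨ht₁, subset_closure ht₁I⟩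
  have hlt : ⟪u, q + t₁ • (q - p)⟫ < ⟪u, q + funkT0 I p q • (q - p)⟫ := hb ▸ hI ht₁I
  simp only [inner_add_right, real_inner_smul_right] at hlt
  nlinarith

end Funk

theorem funkF_eq_log_infDist_div_general {n : ℕ} (I : Set (Euc n)) (p q : Euc n) (hpq : funkLt I p q)
    (uc : Euc n × ℝ) (huc : uc ∈ SuppH I)
    (hb : ⟪uc.1, funkB I p q⟫ = uc.2) :
    ⟪uc.1, q⟫ ≠ uc.2 ∧
    uc.2 < ⟪uc.1, p⟫ ∧ uc.2 < ⟪uc.1, q⟫ ∧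
    dist p (funkB I p q) / dist q (funkB I p q) =
      Metric.infDist p {x | ⟪uc.1, x⟫ = uc.2} / Metric.infDist q {x | ⟪uc.1, x⟫ = uc.2} ∧
    funkF I p q =
      Real.log (Metric.infDist p {x | ⟪uc.1, x⟫ = uc.2} /
        Metric.infDist q {x | ⟪uc.1, x⟫ = uc.2}) := by
  obtain ⟨hu, hI, -⟩ := huc
  set t₀ := funkT0 I p q
  have ht₀ : 0 < t₀ := funkT0_pos hpq
  have hm : ⟪uc.1, q - p⟫ < 0 := inner_sub_neg_of_inner_funkB_eq hpq hI hb
  have hpb : p = funkB I p q + (-(1 + t₀)) • (q - p) := by rw [funkB]; module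
  have hqb : q = funkB I p q + (-t₀) • (q - p) := by rw [funkB]; module
  have hp_sub := inner_add_smul_sub_of_inner_eq hb (-(1 + t₀)) (q - p)
  have hq_sub := inner_add_smul_sub_of_inner_eq hb (-t₀) (q - p)
  rw [← hpb] at hp_sub
  rw [← hqb] at hq_sub
  have hratio := dist_div_dist_eq_infDist_div_infDist hu hb hm.ne hpb hqb
  refine ⟨by nlinarith, by nlinarith, by nlinarith, hratio, ?_⟩
  rw [funkF, if_neg hpq.1, hratio]

/-- for `p < q` and any supporting hyperplane `π₀ = {x | ⟪u,x⟫ = c}` of `I`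
through `b = b(p,q)`: `q ∉ π₀`, both `p` and `q` satisfy `⟪u,·⟫ > c`,
`dist p b / dist q b = d(p,π₀)/d(q,π₀)`, and `F(p,q) = log (d(p,π₀)/d(q,π₀))`. -/
theorem funkF_eq_log_infDist_div {n : ℕ} (hn : 1 ≤ n) (I : Set (Euc n))
    (hne : I.Nonempty) (hop : IsOpen I) (hconv : Convex ℝ I)
    (hcl : closure I ≠ Set.univ)
    (p q : Euc n) (hp : p ∈ Omega I) (hq : q ∈ Omega I)
    (hpq : funkLt I p q)
    (uc : Euc n × ℝ) (huc : uc ∈ SuppH I)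
    (hb : ⟪uc.1, funkB I p q⟫ = uc.2) :
    ⟪uc.1, q⟫ ≠ uc.2 ∧
    uc.2 < ⟪uc.1, p⟫ ∧ uc.2 < ⟪uc.1, q⟫ ∧
    dist p (funkB I p q) / dist q (funkB I p q) =
      Metric.infDist p {x | ⟪uc.1, x⟫ = uc.2} / Metric.infDist q {x | ⟪uc.1, x⟫ = uc.2} ∧
    funkF I p q =
      Real.log (Metric.infDist p {x | ⟪uc.1, x⟫ = uc.2} /
        Metric.infDist q {x | ⟪uc.1, x⟫ = uc.2}) :=
  funkF_eq_log_infDist_div_general I p q hpq uc huc hb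
end
end

section
/- Variational formula for the timelike Funk metric: for p, q ∈ Ω with p < q, F(p,q) = ⨅ (infimum) over π ∈ 𝒫(q) of Real.log (d(p, π) / d(q, π)), and the infimum is attained by every supporting hyperplane of I passing through b(p,q) (such hyperplanes exist and belong to 𝒫(q)). -/
open RealInnerProductSpace
open scoped Classical

noncomputable section

/-!
Along the ray `t ↦ q + t • (q - p)` every supporting hyperplane `⟪u, x⟫ = c` of `I` induces
the affine function `g t = ⟪u, q + t • (q - p)⟫ - c`, and
`log (d(p, π) / d(q, π)) = log (g (-1) / g 0)`.
If `q` lies on the far side of `π` then `g 0 > 0 ≥ g t₀`, which forces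
`g (-1) / g 0 ≥ (1 + t₀) / t₀ = d(p, b) / d(q, b)`, with equality exactly when `g t₀ = 0`,
i.e. when `π` passes through `b = b(p, q)`. Such a hyperplane exists by Hahn–Banach, since
`b ∈ closure I \ I`.
-/

open Topology

section Ray

variable {E : Type*} [NormedAddCommGroup E] [NormedSpace ℝ E]

theorem dist_div_dist_add_smul_sub {p q : E} (hpq : p ≠ q) {t : ℝ} (ht : 0 < t) :
    dist p (q + t • (q - p)) / dist q (q + t • (q - p)) = (1 + t) / t := by
  have hp : q + t • (q - p) - p = (1 + t) • (q - p) := by module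
  have hq : q + t • (q - p) - q = t • (q - p) := by module
  have hnorm : ‖q - p‖ ≠ 0 := norm_ne_zero_iff.2 (sub_ne_zero.2 hpq.symm)
  rw [dist_comm, dist_eq_norm, hp, dist_comm, dist_eq_norm, hq, norm_smul, norm_smul,
    Real.norm_of_nonneg (by linarith), Real.norm_of_nonneg ht.le, mul_div_mul_right _ _ hnorm]

variable {C : Set E} {q v : E}

/-- Since `q ∉ C`, the set is `Set.Ici 0 ∩ (fun t => q + t • v) ⁻¹' C`. -/
theorem isClosed_setOf_pos_add_smul_mem (hC : IsClosed C) (hq : q ∉ C) :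
    IsClosed {t : ℝ | 0 < t ∧ q + t • v ∈ C} := by
  have hset : {t : ℝ | 0 < t ∧ q + t • v ∈ C} = Set.Ici 0 ∩ (fun t : ℝ => q + t • v) ⁻¹' C := by
    ext t
    refine ⟨fun ht => ⟨ht.1.le, ht.2⟩, fun ⟨ht₀, htC⟩ => ⟨ht₀.lt_of_ne ?_, htC⟩⟩
    rintro rfl
    exact hq (by simpa using htC)
  rw [hset]
  exact isClosed_Ici.inter (hC.preimage (by fun_prop))

theorem sInf_pos_add_smul_mem (hC : IsClosed C) (hq : q ∉ C)
    (h : {t : ℝ | 0 < t ∧ q + t • v ∈ C}.Nonempty) :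
    sInf {t : ℝ | 0 < t ∧ q + t • v ∈ C} ∈ {t : ℝ | 0 < t ∧ q + t • v ∈ C} :=
  (isClosed_setOf_pos_add_smul_mem hC hq).csInf_mem h ⟨0, fun _ ht => ht.1.le⟩

theorem add_sInf_smul_notMem_of_isOpen {U : Set E} (hU : IsOpen U) (hUC : U ⊆ C)
    (hpos : 0 < sInf {t : ℝ | 0 < t ∧ q + t • v ∈ C}) :
    q + sInf {t : ℝ | 0 < t ∧ q + t • v ∈ C} • v ∉ U := by
  set t₀ := sInf {t : ℝ | 0 < t ∧ q + t • v ∈ C}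
  intro hU₀
  have hnearU : ∀ᶠ t in 𝓝[<] t₀, q + t • v ∈ U := mem_nhdsWithin_of_mem_nhds
    ((hU.preimage (by fun_prop : Continuous fun t : ℝ => q + t • v)).mem_nhds hU₀)
  have hnear₀ : ∀ᶠ t in 𝓝[<] t₀, t ∈ Set.Ioo 0 t₀ := Ioo_mem_nhdsLT hpos
  obtain ⟨t, htU, ht₀, htt₀⟩ := (hnearU.and hnear₀).exists
  exact htt₀.not_ge (csInf_le ⟨0, fun _ hs => hs.1.le⟩ ⟨ht₀, hUC htU⟩)

end Ray

section Hyperplane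

variable {E : Type*} [NormedAddCommGroup E] [InnerProductSpace ℝ E]

theorem infDist_setOf_inner_eq {u : E} (hu : ‖u‖ = 1) (c : ℝ) (x : E) :
    Metric.infDist x {y | ⟪u, y⟫ = c} = |⟪u, x⟫ - c| := by
  have hproj : x - (⟪u, x⟫ - c) • u ∈ {y | ⟪u, y⟫ = c} := by
    simp only [Set.mem_ofPred_eq, inner_sub_right, real_inner_smul_right,
      real_inner_self_eq_norm_sq, hu]
    ring
  refine le_antisymm ?_ ((Metric.le_infDist ⟨_, hproj⟩).2 fun y hy => ?_)
  · calc Metric.infDist x {y | ⟪u, y⟫ = c} ≤ dist x (x - (⟪u, x⟫ - c) • u) :=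
          Metric.infDist_le_dist_of_mem hproj
      _ = |⟪u, x⟫ - c| := by simp [norm_smul, hu]
  · calc |⟪u, x⟫ - c| = |⟪u, x - y⟫| := by rw [inner_sub_right, hy.out]
      _ ≤ ‖u‖ * ‖x - y‖ := abs_real_inner_le_norm u (x - y)
      _ = dist x y := by rw [hu, one_mul, dist_eq_norm]

theorem log_infDist_div_infDist_setOf_inner_eq {u : E} (hu : ‖u‖ = 1) (c : ℝ) (p q : E) :
    Real.log (Metric.infDist p {y | ⟪u, y⟫ = c} / Metric.infDist q {y | ⟪u, y⟫ = c}) =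
      Real.log ((⟪u, p⟫ - c) / (⟪u, q⟫ - c)) := by
  rw [infDist_setOf_inner_eq hu, infDist_setOf_inner_eq hu, ← abs_div, Real.log_abs]

variable {u p q : E} {c t : ℝ}

theorem one_add_div_le_inner_sub_div (ht : 0 < t) (hq : c < ⟪u, q⟫)
    (hb : ⟪u, q + t • (q - p)⟫ ≤ c) :
    (1 + t) / t ≤ (⟪u, p⟫ - c) / (⟪u, q⟫ - c) := by
  rw [inner_add_right, real_inner_smul_right, inner_sub_right] at hb
  rw [div_le_div_iff₀ ht (sub_pos.2 hq)]
  nlinarith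

theorem one_add_div_eq_inner_sub_div (ht : t ≠ 0) (hq : ⟪u, q⟫ ≠ c)
    (hb : ⟪u, q + t • (q - p)⟫ = c) :
    (1 + t) / t = (⟪u, p⟫ - c) / (⟪u, q⟫ - c) := by
  rw [inner_add_right, real_inner_smul_right, inner_sub_right] at hb
  rw [div_eq_div_iff ht (sub_ne_zero.2 hq)]
  linear_combination hb

theorem lt_inner_of_inner_add_smul {v : E} {t₀ t₁ : ℝ} (ht₀ : 0 < t₀) (ht₀₁ : t₀ < t₁)
    (h₀ : ⟪u, q + t₀ • v⟫ = c) (h₁ : ⟪u, q + t₁ • v⟫ < c) : c < ⟪u, q⟫ := by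
  rw [inner_add_right, real_inner_smul_right] at h₀ h₁
  nlinarith

theorem exists_norm_eq_one_inner_lt_of_notMem [CompleteSpace E] {s : Set E} (hconv : Convex ℝ s)
    (hop : IsOpen s) (hne : s.Nonempty) {x : E} (hx : x ∉ s) :
    ∃ u : E, ‖u‖ = 1 ∧ ∀ a ∈ s, ⟪u, a⟫ < ⟪u, x⟫ := by
  obtain ⟨f, hf⟩ := geometric_hahn_banach_open_point hconv hop hx
  set v := (InnerProductSpace.toDual ℝ E).symm f
  have hv : ∀ y, ⟪v, y⟫ = f y := fun _ => InnerProductSpace.toDual_symm_apply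
  have hv₀ : v ≠ 0 := by
    obtain ⟨a, ha⟩ := hne
    rintro h
    simpa [← hv, h] using hf a ha
  refine ⟨‖v‖⁻¹ • v, norm_smul_inv_norm hv₀, fun a ha => ?_⟩
  simp only [real_inner_smul_left, hv]
  exact mul_lt_mul_of_pos_left (hf a ha) (inv_pos.2 (norm_pos_iff.2 hv₀))

end Hyperplane

section Funk

variable {n : ℕ} {I : Set (Euc n)} {p q : Euc n}

theorem inner_le_of_mem_suppH_of_mem_closure {uc : Euc n × ℝ} (huc : uc ∈ SuppH I)
    {x : Euc n} (hx : x ∈ closure I) : ⟪uc.1, x⟫ ≤ uc.2 := by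
  have hclosure : closure I ⊆ {y | ⟪uc.1, y⟫ ≤ uc.2} :=
    closure_minimal (fun y hy => show ⟪uc.1, y⟫ ≤ uc.2 from (huc.2.1 hy).le)
      (isClosed_le (by fun_prop) continuous_const)
  exact hclosure hx

namespace funkLt

theorem right_notMem_closure (h : funkLt I p q) : q ∉ closure I :=
  h.2.1 (right_mem_segment ℝ p q)

theorem funkT0_mem (h : funkLt I p q) :
    funkT0 I p q ∈ {t : ℝ | 0 < t ∧ q + t • (q - p) ∈ closure I} :=
  sInf_pos_add_smul_mem isClosed_closure h.right_notMem_closure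
    (let ⟨t, ht, htI⟩ := h.2.2; ⟨t, ht, subset_closure htI⟩)

theorem funkT0_pos (h : funkLt I p q) : 0 < funkT0 I p q := h.funkT0_mem.1

theorem funkB_mem_closure (h : funkLt I p q) : funkB I p q ∈ closure I := h.funkT0_mem.2

theorem funkB_notMem (hI : IsOpen I) (h : funkLt I p q) : funkB I p q ∉ I :=
  add_sInf_smul_notMem_of_isOpen hI subset_closure h.funkT0_pos

theorem funkF_eq_log (h : funkLt I p q) :
    funkF I p q = Real.log ((1 + funkT0 I p q) / funkT0 I p q) := by
  rw [funkF, if_neg h.1, funkB, dist_div_dist_add_smul_sub h.1 h.funkT0_pos]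

theorem funkF_le_log_infDist_div (h : funkLt I p q) {uc : Euc n × ℝ} (huc : uc ∈ SuppHSep I q) :
    funkF I p q ≤ Real.log (Metric.infDist p {x | ⟪uc.1, x⟫ = uc.2} /
      Metric.infDist q {x | ⟪uc.1, x⟫ = uc.2}) := by
  rw [h.funkF_eq_log, log_infDist_div_infDist_setOf_inner_eq huc.1.1]
  have ht₀ := h.funkT0_pos
  exact Real.log_le_log (by positivity) (one_add_div_le_inner_sub_div ht₀ huc.2
    (inner_le_of_mem_suppH_of_mem_closure huc.1 h.funkB_mem_closure))

theorem mem_suppHSep_of_inner_funkB_eq (hI : IsOpen I) (h : funkLt I p q) {uc : Euc n × ℝ}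
    (huc : uc ∈ SuppH I) (hb : ⟪uc.1, funkB I p q⟫ = uc.2) : uc ∈ SuppHSep I q := by
  obtain ⟨t₁, ht₁, ht₁I⟩ := h.2.2
  have hle : funkT0 I p q ≤ t₁ := csInf_le ⟨0, fun _ ht => ht.1.le⟩ ⟨ht₁, subset_closure ht₁I⟩
  have hne : funkT0 I p q ≠ t₁ := by
    rintro heq
    exact h.funkB_notMem hI (by rwa [funkB, heq])
  exact ⟨huc, lt_inner_of_inner_add_smul h.funkT0_pos (hle.lt_of_ne hne) hb (huc.2.1 ht₁I)⟩

theorem log_infDist_div_eq_funkF (hI : IsOpen I) (h : funkLt I p q) {uc : Euc n × ℝ}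
    (huc : uc ∈ SuppH I) (hb : ⟪uc.1, funkB I p q⟫ = uc.2) :
    Real.log (Metric.infDist p {x | ⟪uc.1, x⟫ = uc.2} /
      Metric.infDist q {x | ⟪uc.1, x⟫ = uc.2}) = funkF I p q := by
  rw [h.funkF_eq_log, log_infDist_div_infDist_setOf_inner_eq huc.1,
    one_add_div_eq_inner_sub_div h.funkT0_pos.ne'
      (h.mem_suppHSep_of_inner_funkB_eq hI huc hb).2.ne' hb]

theorem exists_mem_suppH_inner_funkB_eq (hI : IsOpen I) (hconv : Convex ℝ I)
    (h : funkLt I p q) : ∃ uc ∈ SuppH I, ⟪uc.1, funkB I p q⟫ = uc.2 := by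
  obtain ⟨t, -, htI⟩ := h.2.2
  obtain ⟨u, hu, hlt⟩ :=
    exists_norm_eq_one_inner_lt_of_notMem hconv hI ⟨_, htI⟩ (h.funkB_notMem hI)
  exact ⟨(u, ⟪u, funkB I p q⟫), ⟨hu, hlt, _, h.funkB_mem_closure, rfl⟩, rfl⟩

end funkLt

end Funk

theorem funkF_eq_iInf_log_infDist_div_general {n : ℕ} (I : Set (Euc n))
    (hop : IsOpen I) (hconv : Convex ℝ I)
    (p q : Euc n)
    (hpq : funkLt I p q) :
    funkF I p q =
      (⨅ uc : SuppHSep I q,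
        Real.log (Metric.infDist p {x | ⟪uc.1.1, x⟫ = uc.1.2} /
          Metric.infDist q {x | ⟪uc.1.1, x⟫ = uc.1.2})) ∧
    (∃ uc ∈ SuppH I, ⟪uc.1, funkB I p q⟫ = uc.2) ∧
    (∀ uc ∈ SuppH I, ⟪uc.1, funkB I p q⟫ = uc.2 →
      uc ∈ SuppHSep I q ∧
      Real.log (Metric.infDist p {x | ⟪uc.1, x⟫ = uc.2} /
        Metric.infDist q {x | ⟪uc.1, x⟫ = uc.2}) = funkF I p q) := by
  obtain ⟨uc₀, huc₀, hb₀⟩ := hpq.exists_mem_suppH_inner_funkB_eq hop hconv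
  have hsep₀ := hpq.mem_suppHSep_of_inner_funkB_eq hop huc₀ hb₀
  refine ⟨?_, ⟨uc₀, huc₀, hb₀⟩, fun uc huc hb =>
    ⟨hpq.mem_suppHSep_of_inner_funkB_eq hop huc hb, hpq.log_infDist_div_eq_funkF hop huc hb⟩⟩
  have : Nonempty (SuppHSep I q) := ⟨⟨uc₀, hsep₀⟩⟩
  symm
  exact ciInf_eq_of_forall_ge_of_forall_gt_exists_lt
    (fun uc => hpq.funkF_le_log_infDist_div uc.2)
    fun _ hw => ⟨⟨uc₀, hsep₀⟩, (hpq.log_infDist_div_eq_funkF hop huc₀ hb₀).trans_lt hw⟩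

/-- variational formula `F(p,q) = ⨅_{π ∈ 𝒫(q)} log (d(p,π)/d(q,π))`;
moreover supporting hyperplanes through `b(p,q)` exist, belong to `𝒫(q)`,
and each attains the infimum. -/
theorem funkF_eq_iInf_log_infDist_div {n : ℕ} (hn : 1 ≤ n) (I : Set (Euc n))
    (hne : I.Nonempty) (hop : IsOpen I) (hconv : Convex ℝ I)
    (hcl : closure I ≠ Set.univ)
    (p q : Euc n) (hp : p ∈ Omega I) (hq : q ∈ Omega I)
    (hpq : funkLt I p q) :
    funkF I p q =
      (⨅ uc : SuppHSep I q,
        Real.log (Metric.infDist p {x | ⟪uc.1.1, x⟫ = uc.1.2} /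
          Metric.infDist q {x | ⟪uc.1.1, x⟫ = uc.1.2})) ∧
    (∃ uc ∈ SuppH I, ⟪uc.1, funkB I p q⟫ = uc.2) ∧
    (∀ uc ∈ SuppH I, ⟪uc.1, funkB I p q⟫ = uc.2 →
      uc ∈ SuppHSep I q ∧
      Real.log (Metric.infDist p {x | ⟪uc.1, x⟫ = uc.2} /
        Metric.infDist q {x | ⟪uc.1, x⟫ = uc.2}) = funkF I p q) :=
  funkF_eq_iInf_log_infDist_div_general I hop hconv p q hpq
end
end

section
/- Euclidean segments are geodesics of the timelike Funk metric: for all p, q, r ∈ Ω with p < q, q < r and q ∈ openSegment ℝ p r (i.e. p, q, r collinear with q strictly between p and r), the time inequality is an equality: F(p,q) + F(q,r) = F(p,r). -/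
open RealInnerProductSpace
open scoped Classical

noncomputable section

/-! The Funk endpoint `b(p,q)` is the first point of `closure I` on the ray from `q` in
direction `q - p`. That point is unchanged when the direction is rescaled by a positive factor,
and when the base point slides forward along the ray without meeting `closure I`. For `q`
strictly between `p` and `r`, the rays defining `b(p,q)`, `b(q,r)` and `b(p,r)` therefore all
reduce to the ray from `r` in direction `r - p`, so the three endpoints are one point `b`, and
the identity becomes `log (|pb|/|qb|) + log (|qb|/|rb|) = log (|pb|/|rb|)`. -/

def rayHit {n : ℕ} (I : Set (Euc n)) (x v : Euc n) : Euc n :=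
  x + tauF I x v • v

open scoped Pointwise

section

variable {n : ℕ} {I : Set (Euc n)} {x v p q r : Euc n}

theorem funkB_eq_rayHit : funkB I p q = rayHit I q (q - p) := rfl

theorem mem_Dcone_of_smul_mem {c : ℝ} (hc : 0 < c) (h : c • v ∈ Dcone I x) : v ∈ Dcone I x := by
  obtain ⟨t, ht, hmem⟩ := h
  exact ⟨t * c, mul_pos ht hc, by rwa [mul_smul]⟩

theorem rayHit_mem_closure (hv : v ∈ Dcone I x) : rayHit I x v ∈ closure I := by
  obtain ⟨t, ht, hmem⟩ := hv
  have hS : IsClosed {t : ℝ | 0 ≤ t ∧ x + t • v ∈ closure I} :=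
    isClosed_Ici.inter (isClosed_closure.preimage (by fun_prop))
  have hτ : tauF I x v ∈ {t : ℝ | 0 ≤ t ∧ x + t • v ∈ closure I} :=
    hS.closure_subset_iff.2 (fun s hs => ⟨hs.1.le, hs.2⟩)
      (csInf_mem_closure ⟨t, ht, subset_closure hmem⟩ ⟨0, fun s hs => hs.1.le⟩)
  exact hτ.2

theorem tauF_smul {c : ℝ} (hc : 0 < c) : tauF I x (c • v) = c⁻¹ * tauF I x v := by
  have hset : {t : ℝ | 0 < t ∧ x + t • c • v ∈ closure I} =
      c⁻¹ • {t : ℝ | 0 < t ∧ x + t • v ∈ closure I} := by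
    ext t
    simp [Set.mem_smul_set_iff_inv_smul_mem₀ (inv_ne_zero hc.ne'), mul_comm c t, mul_smul,
      mul_pos_iff_of_pos_right hc]
  rw [tauF, tauF, hset, Real.sInf_smul_of_nonneg (inv_nonneg.2 hc.le), smul_eq_mul]

theorem rayHit_smul {c : ℝ} (hc : 0 < c) : rayHit I x (c • v) = rayHit I x v := by
  rw [rayHit, rayHit, tauF_smul hc, smul_smul, mul_right_comm, inv_mul_cancel₀ hc.ne', one_mul]

theorem tauF_add_smul {a : ℝ} (ha : 0 < a) (hfree : segment ℝ x (x + a • v) ⊆ Omega I)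
    (hv : v ∈ Dcone I (x + a • v)) : tauF I x v = a + tauF I (x + a • v) v := by
  have hset : {t : ℝ | 0 < t ∧ x + t • v ∈ closure I} =
      OrderIso.addLeft a '' {t : ℝ | 0 < t ∧ x + a • v + t • v ∈ closure I} := by
    ext t
    constructor
    · rintro ⟨ht, hmem⟩
      have hat : a < t := by
        by_contra! hta
        have hseg : x + (t / a) • (a • v) ∈ segment ℝ x (x + a • v) :=
          (convex_segment _ _).add_smul_mem (left_mem_segment ℝ _ _) (right_mem_segment ℝ _ _)
            ⟨div_nonneg ht.le ha.le, div_le_one_of_le₀ hta ha.le⟩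
        rw [smul_smul, div_mul_cancel₀ t ha.ne'] at hseg
        exact hfree hseg hmem
      refine ⟨t - a, ⟨sub_pos.2 hat, ?_⟩, add_sub_cancel a t⟩
      rwa [add_assoc, ← add_smul, add_sub_cancel]
    · rintro ⟨u, ⟨hu, hmem⟩, rfl⟩
      refine ⟨add_pos ha hu, ?_⟩
      rwa [OrderIso.addLeft_apply, add_smul, ← add_assoc]
  obtain ⟨t, ht, hmem⟩ := hv
  have hne : {t : ℝ | 0 < t ∧ x + a • v + t • v ∈ closure I}.Nonempty :=
    ⟨t, ht, subset_closure hmem⟩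
  rw [tauF, tauF, hset, ← OrderIso.map_csInf' _ hne ⟨0, fun _ hu => hu.1.le⟩,
    OrderIso.addLeft_apply]

theorem rayHit_add_smul {a : ℝ} (ha : 0 < a) (hfree : segment ℝ x (x + a • v) ⊆ Omega I)
    (hv : v ∈ Dcone I (x + a • v)) : rayHit I (x + a • v) v = rayHit I x v := by
  rw [rayHit, rayHit, tauF_add_smul ha hfree hv, add_smul, add_assoc]

theorem funkLt.left_notMem_closure (h : funkLt I p q) : p ∉ closure I :=
  h.2.1 (left_mem_segment ℝ p q)

theorem funkLt.right_notMem_closure_s5 (h : funkLt I p q) : q ∉ closure I :=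
  h.2.1 (right_mem_segment ℝ p q)

theorem funkLt.funkB_mem_closure_s5 (h : funkLt I p q) : funkB I p q ∈ closure I :=
  rayHit_mem_closure h.2.2

theorem funkB_eq_of_mem_openSegment (hqr : funkLt I q r) (hseg : q ∈ openSegment ℝ p r) :
    funkB I p q = funkB I p r ∧ funkB I q r = funkB I p r := by
  rw [openSegment_eq_image'] at hseg
  obtain ⟨s, ⟨hs0, hs1⟩, hq⟩ := hseg
  have hqp : q - p = s • (r - p) := by rw [← hq, add_sub_cancel_left]
  have hrq : r - q = (1 - s) • (r - p) := by rw [← hq]; module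
  have hr : q + (1 - s) • (r - p) = r := by rw [← hq]; module
  have hs1' : 0 < 1 - s := sub_pos.2 hs1
  have hdir : r - p ∈ Dcone I r := mem_Dcone_of_smul_mem hs1' (hrq ▸ hqr.2.2)
  have hray := rayHit_add_smul (x := q) hs1' (by rw [hr]; exact hqr.2.1) (by rw [hr]; exact hdir)
  rw [hr] at hray
  rw [funkB_eq_rayHit, funkB_eq_rayHit, funkB_eq_rayHit, hqp, hrq, rayHit_smul hs0,
    rayHit_smul hs1', hray]
  exact ⟨rfl, rfl⟩

end

theorem funkF_add_eq_of_openSegment_general {n : ℕ} (I : Set (Euc n)) (p q r : Euc n)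
    (hpq : funkLt I p q) (hqr : funkLt I q r) (hseg : q ∈ openSegment ℝ p r) :
    funkF I p q + funkF I q r = funkF I p r := by
  obtain ⟨hbq, hbr⟩ := funkB_eq_of_mem_openSegment hqr hseg
  have hpr : p ≠ r := by
    rintro rfl
    rw [openSegment_same] at hseg
    exact hpq.1 hseg.symm
  have hb := hbr ▸ hqr.funkB_mem_closure_s5
  have hdist {x} (hx : x ∉ closure I) : dist x (funkB I p r) ≠ 0 :=
    dist_ne_zero.2 fun h => hx (h ▸ hb)
  have hp := hdist hpq.left_notMem_closure
  have hq := hdist hpq.right_notMem_closure_s5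
  have hr := hdist hqr.right_notMem_closure_s5
  rw [funkF, funkF, funkF, if_neg hpq.1, if_neg hqr.1, if_neg hpr, hbq, hbr,
    ← Real.log_mul (div_ne_zero hp hq) (div_ne_zero hq hr), div_mul_div_cancel₀ hq]

/-- Euclidean segments are geodesics of the timelike Funk metric:
if `p < q`, `q < r` and `q` lies strictly between `p` and `r` on a Euclidean segment,
then the time inequality is an equality. -/
theorem funkF_add_eq_of_openSegment {n : ℕ} (hn : 1 ≤ n) (I : Set (Euc n))
    (hne : I.Nonempty) (hop : IsOpen I) (hconv : Convex ℝ I)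
    (hcl : closure I ≠ Set.univ)
    (p q r : Euc n) (hp : p ∈ Omega I) (hq : q ∈ Omega I) (hr : r ∈ Omega I)
    (hpq : funkLt I p q) (hqr : funkLt I q r)
    (hseg : q ∈ openSegment ℝ p r) :
    funkF I p q + funkF I q r = funkF I p r :=
  funkF_add_eq_of_openSegment_general I p q r hpq hqr hseg
end
end

section
/- Monotonicity of the timelike Funk metric under inclusion of convex sets: let I ⊆ Î be nonempty open convex subsets of E, with timelike Funk order and metric (<, F) associated to I and (<̂, F̂) associated to Î. If p, q ∈ E satisfy both p < q and p <̂ q, then F̂(p,q) ≥ F(p,q). -/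
open RealInnerProductSpace
open scoped Classical

noncomputable section

/-!
Writing `b(p,q) = q + t₀ (q - p)`, the Funk metric is `F(p,q) = log (1 + 1/t₀)`. The ray from `q`
away from `p` meets `closure Î ⊇ closure I` no later than `closure I`, so `t̂₀ ≤ t₀` and
`F̂(p,q) ≥ F(p,q)`.
-/

section FunkParameter

variable {n : ℕ} {I J : Set (Euc n)} {p q : Euc n}

lemma funkT0_pos_s9 (hq : q ∉ closure I) (hray : ∃ t > (0:ℝ), q + t • (q - p) ∈ closure I) :
    0 < funkT0 I p q := by
  set S := {t : ℝ | 0 < t ∧ q + t • (q - p) ∈ closure I}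
  -- `t = 0` gives `q ∉ closure I`, so `S` is the closed set `{t ≥ 0 | ray t ∈ closure I}`.
  have hS : S = Set.Ici 0 ∩ (fun t : ℝ => q + t • (q - p)) ⁻¹' closure I := by
    ext t
    refine ⟨fun ht => ⟨ht.1.le, ht.2⟩, fun ⟨ht, hmem⟩ => ⟨ht.lt_of_ne ?_, hmem⟩⟩
    rintro rfl
    exact hq (by simpa using hmem)
  have hclosed : IsClosed S :=
    hS ▸ isClosed_Ici.inter (isClosed_closure.preimage (by fun_prop))
  obtain ⟨t, ht⟩ := hray
  exact (hclosed.csInf_mem ⟨t, ht⟩ ⟨0, fun s hs => hs.1.le⟩).1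

lemma funkT0_anti (hIJ : I ⊆ J) (hray : ∃ t > (0:ℝ), q + t • (q - p) ∈ closure I) :
    funkT0 J p q ≤ funkT0 I p q := by
  obtain ⟨t, ht⟩ := hray
  exact csInf_le_csInf ⟨0, fun s hs => hs.1.le⟩ ⟨t, ht⟩
    fun s hs => ⟨hs.1, closure_mono hIJ hs.2⟩

lemma funkF_eq_log (hpq : p ≠ q) (ht : 0 < funkT0 I p q) :
    funkF I p q = Real.log (1 + (funkT0 I p q)⁻¹) := by
  set t := funkT0 I p q
  have hd : 0 < ‖q - p‖ := norm_pos_iff.2 (sub_ne_zero.2 hpq.symm)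
  have hdist_p : dist p (funkB I p q) = (1 + t) * ‖q - p‖ := by
    rw [dist_eq_norm, funkB, show p - (q + t • (q - p)) = -((1 + t) • (q - p)) by module,
      norm_neg, norm_smul, Real.norm_of_nonneg (by positivity)]
  have hdist_q : dist q (funkB I p q) = t * ‖q - p‖ := by
    rw [dist_eq_norm, funkB, show q - (q + t • (q - p)) = -(t • (q - p)) by module,
      norm_neg, norm_smul, Real.norm_of_nonneg ht.le]
  rw [funkF, if_neg hpq, hdist_p, hdist_q]
  congr 1
  field_simp
  ring

end FunkParameter

theorem funkF_mono_of_subset_general {n : ℕ} (I Ihat : Set (Euc n))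
    (hsub : I ⊆ Ihat)
    (p q : Euc n) (hpq : funkLt I p q) (hpq' : funkLt Ihat p q) :
    funkF I p q ≤ funkF Ihat p q := by
  obtain ⟨hne, hseg, t, ht, htI⟩ := hpq
  have hray : ∃ t > (0:ℝ), q + t • (q - p) ∈ closure I := ⟨t, ht, subset_closure htI⟩
  have hray' : ∃ t > (0:ℝ), q + t • (q - p) ∈ closure Ihat :=
    ⟨t, ht, closure_mono hsub (subset_closure htI)⟩
  have hpos := funkT0_pos_s9 (hseg (right_mem_segment ℝ p q)) hray
  have hpos' := funkT0_pos_s9 (hpq'.2.1 (right_mem_segment ℝ p q)) hray'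
  rw [funkF_eq_log hne hpos, funkF_eq_log hne hpos']
  have hanti := funkT0_anti hsub hray
  gcongr

/-- monotonicity of the timelike Funk metric under inclusion of convex sets:
if `I ⊆ Î` and `p, q` satisfy both `p < q` (for `I`) and `p <̂ q` (for `Î`),
then `F̂(p,q) ≥ F(p,q)`. -/
theorem funkF_mono_of_subset {n : ℕ} (hn : 1 ≤ n) (I Ihat : Set (Euc n))
    (hne : I.Nonempty) (hop : IsOpen I) (hconv : Convex ℝ I)
    (hcl : closure I ≠ Set.univ)
    (hne' : Ihat.Nonempty) (hop' : IsOpen Ihat) (hconv' : Convex ℝ Ihat)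
    (hcl' : closure Ihat ≠ Set.univ)
    (hsub : I ⊆ Ihat)
    (p q : Euc n) (hpq : funkLt I p q) (hpq' : funkLt Ihat p q) :
    funkF I p q ≤ funkF Ihat p q :=
  funkF_mono_of_subset_general I Ihat hsub p q hpq hpq'
end
end

section
/- The two formulas for the timelike Minkowski functional agree: for p ∈ Ω and v ∈ D(p), one has τ(p,v) > 0 and p + τ(p,v) • v ∈ K; every supporting hyperplane π = {x : ⟪u, x⟫ = c} ∈ 𝒫(p) satisfies ⟪u, v⟫ < 0; and P(p,v) = 1/τ(p,v) = ⨅ (infimum) over π ∈ 𝒫(p) of (−⟪u, v⟫) / (⟪u, p⟫ − c). -/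
open RealInnerProductSpace
open scoped Classical

noncomputable section

/-! The hitting time `τ` is positive because `p ∉ closure I`, and `p + τ • v` lies in `closure I`
but not in the open set `I`. A separating supporting hyperplane `(u, c)` has
`⟪u, p⟫ + τ ⟪u, v⟫ ≤ c` at that point, which is `1 / τ ≤ -⟪u, v⟫ / (⟪u, p⟫ - c)`; a
Hahn–Banach hyperplane through `p + τ • v` attains equality. -/

open Filter Topology

theorem exists_unit_inner_lt_of_convex_of_isOpen {E : Type*} [NormedAddCommGroup E]
    [InnerProductSpace ℝ E] [CompleteSpace E] {s : Set E} (hconv : Convex ℝ s) (hop : IsOpen s)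
    (hne : s.Nonempty) {b : E} (hb : b ∉ s) : ∃ u : E, ‖u‖ = 1 ∧ ∀ x ∈ s, ⟪u, x⟫ < ⟪u, b⟫ := by
  obtain ⟨f, hf⟩ := geometric_hahn_banach_open_point hconv hop hb
  set w := (InnerProductSpace.toDual ℝ E).symm f
  have hw : ∀ x, ⟪w, x⟫ = f x := fun x => InnerProductSpace.toDual_symm_apply
  obtain ⟨a, ha⟩ := hne
  have hw0 : w ≠ 0 := by
    intro h
    simpa [← hw, h] using hf a ha
  refine ⟨(‖w‖⁻¹ : ℝ) • w, norm_smul_inv_norm hw0, fun x hx => ?_⟩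
  simp only [real_inner_smul_left, hw]
  exact mul_lt_mul_of_pos_left (hf x hx) (inv_pos.2 (norm_pos_iff.2 hw0))

namespace Funk

variable {n : ℕ} {I : Set (Euc n)} {p v : Euc n} {t : ℝ}

theorem tauF_nonneg : 0 ≤ tauF I p v :=
  Real.sInf_nonneg fun _ ht => ht.1.le

theorem tauF_le (ht : 0 < t) (h : p + t • v ∈ closure I) : tauF I p v ≤ t :=
  csInf_le ⟨0, fun _ hs => hs.1.le⟩ ⟨ht, h⟩

theorem add_tauF_smul_mem_closure (hv : v ∈ Dcone I p) : p + tauF I p v • v ∈ closure I := by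
  obtain ⟨t, ht, htI⟩ := hv
  have hclosed : IsClosed {t : ℝ | p + t • v ∈ closure I} :=
    isClosed_closure.preimage (by fun_prop)
  exact closure_minimal (fun _ hs => hs.2) hclosed
    (csInf_mem_closure ⟨t, ht, subset_closure htI⟩ ⟨0, fun _ hs => hs.1.le⟩)

theorem tauF_pos (hp : p ∈ Omega I) (hv : v ∈ Dcone I p) : 0 < tauF I p v := by
  refine tauF_nonneg.lt_of_ne fun h => hp ?_
  simpa [← h] using add_tauF_smul_mem_closure hv

theorem tauF_lt (hop : IsOpen I) (ht : 0 < t) (h : p + t • v ∈ I) : tauF I p v < t := by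
  have hU : ∀ᶠ s in 𝓝 t, p + s • v ∈ I ∧ 0 < s :=
    ((hop.preimage (by fun_prop : Continuous fun s : ℝ => p + s • v)).eventually_mem h).and
      (lt_mem_nhds ht)
  obtain ⟨s, ⟨hsI, hs⟩, hst⟩ :=
    ((hU.filter_mono nhdsWithin_le_nhds).and (self_mem_nhdsWithin (s := Set.Iio t))).exists
  exact (tauF_le hs (subset_closure hsI)).trans_lt hst

theorem add_tauF_smul_mem_frontier (hop : IsOpen I) (hp : p ∈ Omega I) (hv : v ∈ Dcone I p) :
    p + tauF I p v • v ∈ frontier I := by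
  rw [hop.frontier_eq]
  exact ⟨add_tauF_smul_mem_closure hv, fun h => (tauF_lt hop (tauF_pos hp hv) h).false⟩

theorem inner_le_of_mem_SuppH {uc : Euc n × ℝ} (huc : uc ∈ SuppH I) {x : Euc n}
    (hx : x ∈ closure I) : ⟪uc.1, x⟫ ≤ uc.2 :=
  closure_minimal (t := {y | ⟪uc.1, y⟫ ≤ uc.2})
    (fun y hy => show ⟪uc.1, y⟫ ≤ uc.2 from (huc.2.1 hy).le)
    (isClosed_le (by fun_prop) (by fun_prop)) hx

theorem inner_lt_zero_of_mem_SuppHSep (hv : v ∈ Dcone I p) {uc : Euc n × ℝ}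
    (huc : uc ∈ SuppHSep I p) : ⟪uc.1, v⟫ < 0 := by
  obtain ⟨t, ht, htI⟩ := hv
  have h : ⟪uc.1, p + t • v⟫ < uc.2 := huc.1.2.1 htI
  rw [inner_add_right, real_inner_smul_right] at h
  nlinarith [huc.2]

theorem Pmink_le_of_mem_SuppHSep (hp : p ∈ Omega I) (hv : v ∈ Dcone I p) {uc : Euc n × ℝ}
    (huc : uc ∈ SuppHSep I p) : Pmink I p v ≤ -⟪uc.1, v⟫ / (⟪uc.1, p⟫ - uc.2) := by
  have hb := inner_le_of_mem_SuppH huc.1 (add_tauF_smul_mem_closure hv)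
  rw [inner_add_right, real_inner_smul_right] at hb
  rw [Pmink, div_le_div_iff₀ (tauF_pos hp hv) (sub_pos.2 huc.2)]
  linarith

theorem isLeast_Pmink (hop : IsOpen I) (hconv : Convex ℝ I) (hp : p ∈ Omega I)
    (hv : v ∈ Dcone I p) :
    IsLeast (Set.range fun uc : SuppHSep I p => -⟪uc.1.1, v⟫ / (⟪uc.1.1, p⟫ - uc.1.2))
      (Pmink I p v) := by
  refine ⟨?_, Set.forall_mem_range.2 fun uc => Pmink_le_of_mem_SuppHSep hp hv uc.2⟩
  set τ := tauF I p v
  have hτ : 0 < τ := tauF_pos hp hv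
  obtain ⟨t, ht, htI⟩ := hv
  obtain ⟨u, hu, hsep⟩ := exists_unit_inner_lt_of_convex_of_isOpen hconv hop ⟨_, htI⟩
    (fun h => (tauF_lt hop hτ h).false)
  -- `p + t • v ∈ I` lies strictly below the hyperplane and `τ < t`
  have huv : ⟪u, v⟫ < 0 := by
    have h := hsep _ htI
    simp only [inner_add_right, real_inner_smul_right] at h
    nlinarith [tauF_lt hop ht htI]
  have hmem : (u, ⟪u, p + τ • v⟫) ∈ SuppHSep I p := by
    refine ⟨⟨hu, hsep, _, add_tauF_smul_mem_closure ⟨t, ht, htI⟩, rfl⟩, ?_⟩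
    simp only [inner_add_right, real_inner_smul_right]
    nlinarith
  refine ⟨⟨_, hmem⟩, ?_⟩
  show -⟪u, v⟫ / (⟪u, p⟫ - ⟪u, p + τ • v⟫) = 1 / τ
  rw [inner_add_right, real_inner_smul_right,
    show ⟪u, p⟫ - (⟪u, p⟫ + τ * ⟪u, v⟫) = -⟪u, v⟫ * τ by ring,
    div_mul_cancel_left₀ (neg_ne_zero.2 huv.ne), one_div]

end Funk

open Funk in
theorem pmink_eq_iInf_general {n : ℕ} (I : Set (Euc n))
    (hop : IsOpen I) (hconv : Convex ℝ I)
    (p : Euc n) (hp : p ∈ Omega I) (v : Euc n) (hv : v ∈ Dcone I p) :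
    0 < tauF I p v ∧
    p + tauF I p v • v ∈ frontier I ∧
    (∀ uc ∈ SuppHSep I p, ⟪uc.1, v⟫ < 0) ∧
    Pmink I p v = ⨅ uc : SuppHSep I p, (-⟪uc.1.1, v⟫) / (⟪uc.1.1, p⟫ - uc.1.2) := by
  have hleast := isLeast_Pmink hop hconv hp hv
  have : Nonempty (SuppHSep I p) := by
    obtain ⟨⟨uc, -⟩, -⟩ := hleast
    exact ⟨uc⟩
  exact ⟨tauF_pos hp hv, add_tauF_smul_mem_frontier hop hp hv,
    fun _ => inner_lt_zero_of_mem_SuppHSep hv, hleast.isGLB.ciInf_eq.symm⟩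

/-- the two formulas for the timelike Minkowski functional agree: for
`p ∈ Ω` and `v ∈ D(p)`, one has `τ(p,v) > 0`, `p + τ(p,v) • v ∈ K = frontier I`, every
supporting hyperplane `(u,c) ∈ 𝒫(p)` satisfies `⟪u,v⟫ < 0`, and
`P(p,v) = 1/τ(p,v) = ⨅_{(u,c) ∈ 𝒫(p)} (−⟪u,v⟫)/(⟪u,p⟫ − c)`. -/
theorem pmink_eq_iInf {n : ℕ} (hn : 1 ≤ n) (I : Set (Euc n))
    (hne : I.Nonempty) (hop : IsOpen I) (hconv : Convex ℝ I)
    (hcl : closure I ≠ Set.univ)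
    (p : Euc n) (hp : p ∈ Omega I) (v : Euc n) (hv : v ∈ Dcone I p) :
    0 < tauF I p v ∧
    p + tauF I p v • v ∈ frontier I ∧
    (∀ uc ∈ SuppHSep I p, ⟪uc.1, v⟫ < 0) ∧
    Pmink I p v = ⨅ uc : SuppHSep I p, (-⟪uc.1.1, v⟫) / (⟪uc.1.1, p⟫ - uc.1.2) :=
  pmink_eq_iInf_general I hop hconv p hp v hv
end
end

section
/- The functional P(p, ·) is a timelike Minkowski functional: for every p ∈ Ω, the set D(p) is an open convex cone not containing 0 (if v ∈ D(p) and λ > 0 then λ • v ∈ D(p)), and for all v, w ∈ D(p), λ > 0 and s ∈ (0,1): P(p,v) > 0; P(p, λ • v) = λ * P(p,v); (1−s) • v + s • w ∈ D(p); and P(p, (1−s) • v + s • w) ≥ (1−s) * P(p,v) + s * P(p,w) (reverse convexity). -/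
open RealInnerProductSpace
open scoped Classical

noncomputable section

/-!
`D(p)` is the union over `t > 0` of the open convex sets `t⁻¹ • (I - p)`. Everything else
rests on one computation: if `p + t • v` and `p + s • w` lie in a convex set `C` and
`a + b = 1` with `a, b ≥ 0`, then `p + r • (a • v + b • w) ∈ C` where `1 / r = a / t + b / s`.
Applied to `I` it gives convexity of `D(p)`; applied to `closure I` with `t = τ(p,v)`,
`s = τ(p,w)` it gives `τ(p, a • v + b • w) ≤ r`, i.e. concavity of `P(p,·) = 1 / τ(p,·)`.
-/

lemma div_add_div_pos_of_add_eq_one {t s a b : ℝ} (ht : 0 < t) (hs : 0 < s)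
    (ha : 0 ≤ a) (hb : 0 ≤ b) (hab : a + b = 1) : 0 < a / t + b / s := by
  rcases ha.lt_or_eq with ha | rfl
  · exact add_pos_of_pos_of_nonneg (div_pos ha ht) (div_nonneg hb hs.le)
  · rw [zero_add] at hab
    simpa [hab] using hs

lemma Convex.add_smul_add_smul_mem {E : Type*} [AddCommGroup E] [Module ℝ E] {C : Set E}
    (hC : Convex ℝ C) {p v w : E} {t s a b : ℝ} (ht : 0 < t) (hs : 0 < s)
    (hv : p + t • v ∈ C) (hw : p + s • w ∈ C) (ha : 0 ≤ a) (hb : 0 ≤ b) (hab : a + b = 1) :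
    p + (a / t + b / s)⁻¹ • (a • v + b • w) ∈ C := by
  have hpos := div_add_div_pos_of_add_eq_one ht hs ha hb hab
  set r := (a / t + b / s)⁻¹
  have hr : 0 ≤ r := inv_nonneg.2 hpos.le
  have hweights : r * (a / t) + r * (b / s) = 1 := by
    rw [← mul_add, inv_mul_cancel₀ hpos.ne']
  convert hC hv hw (mul_nonneg hr (div_nonneg ha ht.le)) (mul_nonneg hr (div_nonneg hb hs.le))
    hweights using 1
  match_scalars
  · linear_combination -hweights
  · field_simp
  · field_simp

section TimelikeCone

open scoped Pointwise

variable {n : ℕ} {I : Set (Euc n)} {p v w : Euc n}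

lemma isOpen_Dcone (hI : IsOpen I) : IsOpen (Dcone I p) := by
  have hunion : Dcone I p = ⋃ t ∈ Set.Ioi (0 : ℝ), (fun v ↦ p + t • v) ⁻¹' I := by
    ext v
    simp [Dcone]
  rw [hunion]
  exact isOpen_biUnion fun t _ ↦ hI.preimage (continuous_const.add (continuous_const_smul t))

lemma convex_Dcone (hI : Convex ℝ I) : Convex ℝ (Dcone I p) := by
  rintro v ⟨t, ht, hv⟩ w ⟨s, hs, hw⟩ a b ha hb hab
  exact ⟨_, inv_pos.2 (div_add_div_pos_of_add_eq_one ht hs ha hb hab),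
    hI.add_smul_add_smul_mem ht hs hv hw ha hb hab⟩

lemma zero_notMem_Dcone (hp : p ∈ Omega I) : (0 : Euc n) ∉ Dcone I p := by
  rintro ⟨t, -, h⟩
  rw [smul_zero, add_zero] at h
  exact hp (subset_closure h)

lemma smul_mem_Dcone (hv : v ∈ Dcone I p) {l : ℝ} (hl : 0 < l) : l • v ∈ Dcone I p := by
  obtain ⟨t, ht, h⟩ := hv
  refine ⟨t / l, div_pos ht hl, ?_⟩
  rwa [smul_smul, div_mul_cancel₀ t hl.ne']

lemma bddBelow_tauF_set : BddBelow {t : ℝ | 0 < t ∧ p + t • v ∈ closure I} :=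
  ⟨0, fun _ ht ↦ ht.1.le⟩

lemma tauF_le {t : ℝ} (ht : 0 < t) (h : p + t • v ∈ closure I) : tauF I p v ≤ t :=
  csInf_le bddBelow_tauF_set ⟨ht, h⟩

lemma tauF_mem_closure (hv : v ∈ Dcone I p) : p + tauF I p v • v ∈ closure I := by
  obtain ⟨t, ht, h⟩ := hv
  have hne : {t : ℝ | 0 < t ∧ p + t • v ∈ closure I}.Nonempty := ⟨t, ht, subset_closure h⟩
  have hclosed : IsClosed {t : ℝ | p + t • v ∈ closure I} :=
    isClosed_closure.preimage (continuous_const.add (continuous_id.smul continuous_const))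
  exact hclosed.closure_subset_iff.2 (fun _ h ↦ h.2) (csInf_mem_closure hne bddBelow_tauF_set)

/-- The ray from `p ∉ closure I` needs a time at least `ε / ‖v‖` to leave a ball
`B(p, ε)` disjoint from `closure I`. -/
lemma tauF_pos (hp : p ∈ Omega I) (hv : v ∈ Dcone I p) : 0 < tauF I p v := by
  have hv0 : 0 < ‖v‖ := norm_pos_iff.2 fun h ↦ zero_notMem_Dcone hp (h ▸ hv)
  obtain ⟨ε, hε, hball⟩ := Metric.isOpen_iff.1 isClosed_closure.isOpen_compl p hp
  obtain ⟨t, ht, h⟩ := hv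
  refine (div_pos hε hv0).trans_le (le_csInf ⟨t, ht, subset_closure h⟩ ?_)
  rintro t ⟨ht, h⟩
  by_contra! hlt
  refine hball ?_ h
  calc dist (p + t • v) p = t * ‖v‖ := by
        rw [dist_eq_norm, add_sub_cancel_left, norm_smul, Real.norm_of_nonneg ht.le]
    _ < ε / ‖v‖ * ‖v‖ := by gcongr
    _ = ε := div_mul_cancel₀ ε hv0.ne'

lemma tauF_smul_s11 {l : ℝ} (hl : 0 < l) : tauF I p (l • v) = l⁻¹ * tauF I p v := by
  have hset : {t : ℝ | 0 < t ∧ p + t • (l • v) ∈ closure I}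
      = l⁻¹ • {t : ℝ | 0 < t ∧ p + t • v ∈ closure I} := by
    ext t
    rw [Set.mem_smul_set_iff_inv_smul_mem₀ (inv_ne_zero hl.ne'), inv_inv, smul_eq_mul]
    simp only [Set.mem_ofPred_eq, smul_smul, mul_comm l t]
    exact and_congr_left fun _ ↦ (mul_pos_iff_of_pos_right hl).symm
  rw [tauF, hset, Real.sInf_smul_of_nonneg (inv_nonneg.2 hl.le), smul_eq_mul, tauF]

lemma Pmink_pos (hp : p ∈ Omega I) (hv : v ∈ Dcone I p) : 0 < Pmink I p v :=
  one_div_pos.2 (tauF_pos hp hv)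

lemma Pmink_smul {l : ℝ} (hl : 0 < l) : Pmink I p (l • v) = l * Pmink I p v := by
  rw [Pmink, Pmink, tauF_smul_s11 hl, one_div, one_div, mul_inv, inv_inv]

lemma concaveOn_Pmink (hp : p ∈ Omega I) (hI : Convex ℝ I) :
    ConcaveOn ℝ (Dcone I p) (Pmink I p) := by
  refine ⟨convex_Dcone hI, fun v hv w hw a b ha hb hab ↦ ?_⟩
  have hτv := tauF_pos hp hv
  have hτw := tauF_pos hp hw
  have hle : tauF I p (a • v + b • w) ≤ (a / tauF I p v + b / tauF I p w)⁻¹ :=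
    tauF_le (inv_pos.2 (div_add_div_pos_of_add_eq_one hτv hτw ha hb hab))
      (hI.closure.add_smul_add_smul_mem hτv hτw (tauF_mem_closure hv) (tauF_mem_closure hw)
        ha hb hab)
  calc a • Pmink I p v + b • Pmink I p w = 1 / (a / tauF I p v + b / tauF I p w)⁻¹ := by
        simp only [Pmink, smul_eq_mul, div_eq_mul_inv, one_mul, inv_inv]
    _ ≤ Pmink I p (a • v + b • w) :=
        one_div_le_one_div_of_le (tauF_pos hp (convex_Dcone hI hv hw ha hb hab)) hle

end TimelikeCone

theorem pmink_is_timelike_minkowski_general {n : ℕ} (I : Set (Euc n))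
    (hop : IsOpen I) (hconv : Convex ℝ I)
    (p : Euc n) (hp : p ∈ Omega I) :
    IsOpen (Dcone I p) ∧ Convex ℝ (Dcone I p) ∧ (0 : Euc n) ∉ Dcone I p ∧
    (∀ v ∈ Dcone I p, ∀ l : ℝ, 0 < l → l • v ∈ Dcone I p) ∧
    (∀ v ∈ Dcone I p, ∀ w ∈ Dcone I p, ∀ l : ℝ, 0 < l → ∀ s ∈ Set.Ioo (0:ℝ) 1,
      0 < Pmink I p v ∧
      Pmink I p (l • v) = l * Pmink I p v ∧
      (1 - s) • v + s • w ∈ Dcone I p ∧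
      (1 - s) * Pmink I p v + s * Pmink I p w ≤ Pmink I p ((1 - s) • v + s • w)) := by
  refine ⟨isOpen_Dcone hop, convex_Dcone hconv, zero_notMem_Dcone hp,
    fun v hv l hl ↦ smul_mem_Dcone hv hl, fun v hv w hw l hl s ⟨hs0, hs1⟩ ↦ ?_⟩
  have hs : 0 ≤ 1 - s := by linarith
  exact ⟨Pmink_pos hp hv, Pmink_smul hl, convex_Dcone hconv hv hw hs hs0.le (by ring),
    (concaveOn_Pmink hp hconv).2 hv hw hs hs0.le (by ring)⟩

/-- `P(p,·)` is a timelike Minkowski functional: `D(p)` is an open convex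
cone not containing `0`, and on it `P(p,·)` is positive, positively homogeneous and
reverse-convex (concave). -/
theorem pmink_is_timelike_minkowski {n : ℕ} (hn : 1 ≤ n) (I : Set (Euc n))
    (hne : I.Nonempty) (hop : IsOpen I) (hconv : Convex ℝ I)
    (hcl : closure I ≠ Set.univ)
    (p : Euc n) (hp : p ∈ Omega I) :
    IsOpen (Dcone I p) ∧ Convex ℝ (Dcone I p) ∧ (0 : Euc n) ∉ Dcone I p ∧
    (∀ v ∈ Dcone I p, ∀ l : ℝ, 0 < l → l • v ∈ Dcone I p) ∧
    (∀ v ∈ Dcone I p, ∀ w ∈ Dcone I p, ∀ l : ℝ, 0 < l → ∀ s ∈ Set.Ioo (0:ℝ) 1,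
      0 < Pmink I p v ∧
      Pmink I p (l • v) = l * Pmink I p v ∧
      (1 - s) • v + s • w ∈ Dcone I p ∧
      (1 - s) * Pmink I p v + s * Pmink I p w ≤ Pmink I p ((1 - s) • v + s • w)) :=
  pmink_is_timelike_minkowski_general I hop hconv p hp
end
end
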